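/- Call an n×n matrix S over 𝔽₂ skew-upper triangular if S_{ij} = 0 whenever i + j > n + 1 (all entries strictly below the antidiagonal vanish). Then every matrix M ∈ GLₙ(𝔽₂) is conjugate in GLₙ(𝔽₂) to a product S₁ · S₂ · U, where S₁ and S₂ are skew-upper triangular and U is upper triangular. -/

import Mathlib

/-!
Over any field, an invertible `M` is brought to lower triangular form `L = X * M * Y` with `X`, `Y`
invertible upper triangular: an upper triangular row operation makes the corner entry nonzero,
upper triangular column operations clear the rest of the first row, and one recurses on the
remaining block. Then `X * M * X⁻¹ = L * (Y⁻¹ * X⁻¹)`, and `L = J * (J * L)` for the antidiagonal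
permutation matrix `J`; both `J` and `J * L` vanish strictly below the antidiagonal.
-/

open Matrix

namespace Matrix

section ConsBlock

variable {R : Type*} {m : ℕ}

/-- The block matrix `[[a, r], [c, A]]` with a `1 × 1` upper-left corner. -/
def consBlock (a : R) (r c : Fin m → R) (A : Matrix (Fin m) (Fin m) R) :
    Matrix (Fin (m + 1)) (Fin (m + 1)) R :=
  of (Fin.cons (Fin.cons a r) fun i => Fin.cons (c i) (A i))

variable (a : R) (r c : Fin m → R) (A : Matrix (Fin m) (Fin m) R)

@[simp] lemma consBlock_zero_zero : consBlock a r c A 0 0 = a := rfl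

@[simp] lemma consBlock_zero_succ (j : Fin m) : consBlock a r c A 0 j.succ = r j := rfl

@[simp] lemma consBlock_succ_zero (i : Fin m) : consBlock a r c A i.succ 0 = c i := rfl

@[simp] lemma consBlock_succ_succ (i j : Fin m) : consBlock a r c A i.succ j.succ = A i j := rfl

@[simp] lemma submatrix_succ_succ_consBlock :
    (consBlock a r c A).submatrix Fin.succ Fin.succ = A := rfl

lemma eq_consBlock (M : Matrix (Fin (m + 1)) (Fin (m + 1)) R) :
    M = consBlock (M 0 0) (fun j => M 0 j.succ) (fun i => M i.succ 0)
      (M.submatrix Fin.succ Fin.succ) := by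
  ext i j
  cases i using Fin.cases <;> cases j using Fin.cases <;> rfl

lemma consBlock_mul_consBlock [CommSemiring R] (b : R) (s d : Fin m → R)
    (B : Matrix (Fin m) (Fin m) R) :
    consBlock a r c A * consBlock b s d B =
      consBlock (a * b + r ⬝ᵥ d) (a • s + r ᵥ* B) (b • c + A *ᵥ d) (vecMulVec c s + A * B) := by
  ext i j
  cases i using Fin.cases <;> cases j using Fin.cases <;>
    simp [mul_apply, Fin.sum_univ_succ, dotProduct, vecMul, mulVec, vecMulVec_apply, mul_comm]

lemma det_consBlock_zero₁₂ [CommRing R] : (consBlock a 0 c A).det = a * A.det := by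
  rw [det_succ_row_zero, Fin.sum_univ_succ]
  simp [Fin.succAbove_zero]

lemma det_consBlock_zero₂₁ [CommRing R] : (consBlock a r 0 A).det = a * A.det := by
  rw [det_succ_column_zero, Fin.sum_univ_succ]
  simp [Fin.succAbove_zero]

variable [Zero R] {A}

lemma IsUpperTriangular.consBlock (hA : A.IsUpperTriangular) :
    (consBlock a r 0 A).IsUpperTriangular := by
  intro i j hji
  cases i using Fin.cases with
  | zero => exact absurd hji (Fin.not_lt_zero j)
  | succ i =>
    cases j using Fin.cases with
    | zero => rfl
    | succ j => exact hA (Fin.succ_lt_succ_iff.mp hji)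

lemma IsLowerTriangular.consBlock (hA : A.IsLowerTriangular) :
    (consBlock a 0 c A).IsLowerTriangular := by
  intro i j hij
  cases j using Fin.cases with
  | zero => exact absurd hij (Fin.not_lt_zero i)
  | succ j =>
    cases i using Fin.cases with
    | zero => rfl
    | succ i => exact hA (Fin.succ_lt_succ_iff.mp hij)

end ConsBlock

section Triangularization

variable {K : Type*} [Field K] {m : ℕ}

lemma exists_isUpperTriangular_mul_apply_zero_zero_ne_zero
    {M : Matrix (Fin (m + 1)) (Fin (m + 1)) K} (hM : IsUnit M) :
    ∃ X : Matrix (Fin (m + 1)) (Fin (m + 1)) K,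
      IsUnit X ∧ X.IsUpperTriangular ∧ (X * M) 0 0 ≠ 0 := by
  obtain ⟨i, hi⟩ : ∃ i, M i 0 ≠ 0 := by
    by_contra! h
    rw [isUnit_iff_isUnit_det, det_succ_column_zero] at hM
    simp [h] at hM
  by_cases h0 : M 0 0 = 0
  · have hi0 : (0 : Fin (m + 1)) ≠ i := by rintro rfl; exact hi h0
    refine ⟨transvection 0 i 1, ?_, blockTriangular_transvection (Fin.zero_le i) 1, ?_⟩
    · rw [isUnit_iff_isUnit_det, det_transvection_of_ne _ _ hi0]
      exact isUnit_one
    · rwa [transvection_mul_apply_same, h0, zero_add, one_mul]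
  · exact ⟨1, isUnit_one, blockTriangular_one, by rwa [one_mul]⟩

lemma exists_mul_isUpperTriangular_eq_consBlock
    {N : Matrix (Fin (m + 1)) (Fin (m + 1)) K} (hN : N 0 0 ≠ 0) :
    ∃ (Y : Matrix (Fin (m + 1)) (Fin (m + 1)) K) (c : Fin m → K) (A : Matrix (Fin m) (Fin m) K),
      IsUnit Y ∧ Y.IsUpperTriangular ∧ N * Y = consBlock (N 0 0) 0 c A := by
  set r : Fin m → K := fun j => N 0 j.succ
  set c : Fin m → K := fun i => N i.succ 0
  refine ⟨consBlock 1 (-(N 0 0)⁻¹ • r) 0 1, c,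
    vecMulVec c (-(N 0 0)⁻¹ • r) + N.submatrix Fin.succ Fin.succ, ?_,
    IsUpperTriangular.consBlock 1 _ blockTriangular_one, ?_⟩
  · rw [isUnit_iff_isUnit_det, det_consBlock_zero₂₁, det_one, mul_one]
    exact isUnit_one
  · calc N * consBlock 1 (-(N 0 0)⁻¹ • r) 0 1
        = consBlock (N 0 0) r c (N.submatrix Fin.succ Fin.succ) *
            consBlock 1 (-(N 0 0)⁻¹ • r) 0 1 := by rw [← eq_consBlock]
      _ = _ := by
        rw [consBlock_mul_consBlock, smul_smul, mul_neg, mul_inv_cancel₀ hN]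
        simp

theorem exists_isUpperTriangular_mul_mul_isUpperTriangular_isLowerTriangular :
    ∀ {m : ℕ} (M : Matrix (Fin m) (Fin m) K), IsUnit M →
      ∃ X Y : Matrix (Fin m) (Fin m) K, IsUnit X ∧ IsUnit Y ∧
        X.IsUpperTriangular ∧ Y.IsUpperTriangular ∧ (X * M * Y).IsLowerTriangular
  | 0, _, _ => ⟨1, 1, isUnit_one, isUnit_one, blockTriangular_one, blockTriangular_one,
      fun i => i.elim0⟩
  | m + 1, M, hM => by
    obtain ⟨X₀, hX₀, hX₀U, hp⟩ := exists_isUpperTriangular_mul_apply_zero_zero_ne_zero hM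
    obtain ⟨Y₀, c, A, hY₀, hY₀U, hN⟩ := exists_mul_isUpperTriangular_eq_consBlock hp
    have hA : IsUnit A := by
      have h := (hX₀.mul hM).mul hY₀
      rw [hN, isUnit_iff_isUnit_det, det_consBlock_zero₁₂] at h
      exact (isUnit_iff_isUnit_det A).mpr (isUnit_of_mul_isUnit_right h)
    obtain ⟨X, Y, hX, hY, hXU, hYU, hL⟩ :=
      exists_isUpperTriangular_mul_mul_isUpperTriangular_isLowerTriangular A hA
    have isUnit_lift {B : Matrix (Fin m) (Fin m) K} (hB : IsUnit B) :
        IsUnit (consBlock 1 0 0 B) := by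
      rwa [isUnit_iff_isUnit_det, det_consBlock_zero₁₂, one_mul, ← isUnit_iff_isUnit_det]
    refine ⟨consBlock 1 0 0 X * X₀, Y₀ * consBlock 1 0 0 Y, (isUnit_lift hX).mul hX₀,
      hY₀.mul (isUnit_lift hY), (hXU.consBlock _ _).mul hX₀U, hY₀U.mul (hYU.consBlock _ _), ?_⟩
    have h : consBlock 1 0 0 X * X₀ * M * (Y₀ * consBlock 1 0 0 Y) =
        consBlock ((X₀ * M) 0 0) 0 (X *ᵥ c) (X * A * Y) := by
      rw [show consBlock 1 0 0 X * X₀ * M * (Y₀ * consBlock 1 0 0 Y) =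
          consBlock 1 0 0 X * (X₀ * M * Y₀) * consBlock 1 0 0 Y by simp only [mul_assoc], hN,
        consBlock_mul_consBlock, consBlock_mul_consBlock]
      simp
    rw [h]
    exact hL.consBlock _ _

end Triangularization

section Antidiagonal

variable {R : Type*} {n : ℕ}

/-- With `0`-based indices, `i + j ≥ n` is the region strictly below the antidiagonal. -/
def IsSkewUpperTriangular [Zero R] (S : Matrix (Fin n) (Fin n) R) : Prop :=
  ∀ i j : Fin n, n ≤ i.val + j.val → S i j = 0

variable [Semiring R]

lemma isSkewUpperTriangular_revPerm_permMatrix :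
    (Fin.revPerm.permMatrix R : Matrix (Fin n) (Fin n) R).IsSkewUpperTriangular := by
  intro i j hij
  have : Fin.rev i ≠ j := by
    intro h
    rw [← h, Fin.val_rev] at hij
    omega
  simp [PEquiv.toMatrix_apply, this]

lemma IsLowerTriangular.isSkewUpperTriangular_revPerm_permMatrix_mul
    {L : Matrix (Fin n) (Fin n) R} (hL : L.IsLowerTriangular) :
    (Fin.revPerm.permMatrix R * L).IsSkewUpperTriangular := by
  intro i j hij
  rw [PEquiv.toMatrix_toPEquiv_mul]
  refine hL (show Fin.rev i < j from ?_)
  rw [Fin.lt_def, Fin.val_rev]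
  omega

lemma revPerm_permMatrix_mul_self :
    (Fin.revPerm.permMatrix R : Matrix (Fin n) (Fin n) R) * Fin.revPerm.permMatrix R = 1 := by
  rw [← permMatrix_mul]
  convert permMatrix_one
  ext i
  simp

end Antidiagonal

end Matrix

/-- Every `M ∈ GLₙ(𝔽₂)` is conjugate to a product `S₁ · S₂ · U` with
`S₁, S₂` skew-upper triangular (entries strictly below the antidiagonal vanish,
i.e. `S i j = 0` whenever `i.val + j.val ≥ n` in 0-based indexing) and `U` upper
triangular. -/
theorem stmt4 (n : ℕ) (M : Matrix (Fin n) (Fin n) (ZMod 2)) (hM : IsUnit M) :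
    ∃ P S₁ S₂ U : Matrix (Fin n) (Fin n) (ZMod 2),
      IsUnit P ∧
      (∀ i j : Fin n, n ≤ i.val + j.val → S₁ i j = 0) ∧
      (∀ i j : Fin n, n ≤ i.val + j.val → S₂ i j = 0) ∧
      (∀ i j : Fin n, j < i → U i j = 0) ∧
      P * M * P⁻¹ = S₁ * S₂ * U := by
  obtain ⟨X, Y, hX, hY, hXU, hYU, hL⟩ :=
    exists_isUpperTriangular_mul_mul_isUpperTriangular_isLowerTriangular M hM
  set J : Matrix (Fin n) (Fin n) (ZMod 2) := Fin.revPerm.permMatrix (ZMod 2)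
  have : Invertible X := hX.invertible
  have : Invertible Y := hY.invertible
  refine ⟨X, J, J * (X * M * Y), Y⁻¹ * X⁻¹, hX, isSkewUpperTriangular_revPerm_permMatrix,
    hL.isSkewUpperTriangular_revPerm_permMatrix_mul,
    (blockTriangular_inv_of_blockTriangular hYU).mul (blockTriangular_inv_of_blockTriangular hXU),
    ?_⟩
  calc X * M * X⁻¹ = X * M * Y * (Y⁻¹ * X⁻¹) := by simp [mul_assoc]
    _ = J * (J * (X * M * Y)) * (Y⁻¹ * X⁻¹) := by
      rw [← mul_assoc J, revPerm_permMatrix_mul_self, one_mul]
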